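/- Let L = {X + π(ξ) + ξ : X ∈ 𝔇, ξ ∈ 𝔇⁰} be a Dirac structure of gl(𝕍) ⊕ 𝕍 with characteristic pair (𝔇, π), and let [ξ,η]_{𝔇⁰} := π(ξ)·η be the induced bracket on 𝔇⁰. Then an element N ∈ End⁰ ⊕ End¹ belongs to the normalizer N_L (i.e. {N, l} ∈ L for all l ∈ L) if and only if: (1) [N, X] ∈ 𝔇 for all X ∈ 𝔇; and (2) N·ξ ∈ 𝔇⁰ for all ξ ∈ 𝔇⁰ and N·[ξ,η]_{𝔇⁰} = [ξ, N·η]_{𝔇⁰} + [N·ξ, η]_{𝔇⁰} for all ξ, η ∈ 𝔇⁰. -/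

import Mathlib

/-!
Maximality of `L` makes `𝔇` the annihilator of `𝔇⁰`: a pure element `(W, 0)` is orthogonal to `L`
exactly when `W` kills `𝔇⁰`. Since the action is a representation of the bracket of `gl(𝕍)`,
`[N, π ξ] - π (N·ξ)` kills `𝔇⁰` exactly when `N` is a derivation of `[ξ, ·]_{𝔇⁰}`. Finally
`{N, X + π ξ + ξ} = [N, X] + ([N, π ξ] - π (N·ξ)) + π (N·ξ) + N·ξ`, so it lies in `L` for all
`X ∈ 𝔇`, `ξ ∈ 𝔇⁰` iff the three conditions hold.
-/

open LinearMap

noncomputable section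

namespace Omni

variable {V₀ V₁ : Type*}
  [AddCommGroup V₀] [Module ℝ V₀] [AddCommGroup V₁] [Module ℝ V₁]

variable (d : V₁ →ₗ[ℝ] V₀)

/-- `End⁰`: pairs `(A₀, A₁)` of endomorphisms with `A₀ ∘ d = d ∘ A₁`. -/
def End0 : Submodule ℝ ((V₀ →ₗ[ℝ] V₀) × (V₁ →ₗ[ℝ] V₁)) where
  carrier := {A | A.1 ∘ₗ d = d ∘ₗ A.2}
  add_mem' := by
    intro a b ha hb
    simp only [Set.mem_setOf_eq] at *
    simp [add_comp, comp_add, ha, hb]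
  zero_mem' := by
    simp only [Set.mem_setOf_eq]
    simp
  smul_mem' := by
    intro c a ha
    simp only [Set.mem_setOf_eq] at *
    simp [smul_comp, comp_smul, ha]

lemma mem_End0 {A : (V₀ →ₗ[ℝ] V₀) × (V₁ →ₗ[ℝ] V₁)} :
    A ∈ End0 d ↔ A.1 ∘ₗ d = d ∘ₗ A.2 := Iff.rfl

/-- Morphism space of `gl(𝕍)`:  `End⁰ ⊕ End¹`. -/
abbrev Gl := ↥(End0 d) × (V₀ →ₗ[ℝ] V₁)

/-- Morphism space of the omni-Lie 2-algebra `gl(𝕍) ⊕ 𝕍`. -/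
abbrev E := Gl d × (V₀ × V₁)

/-- `δ : End¹ → End⁰`, `δφ = (d∘φ, φ∘d)`. -/
def δm (φ : V₀ →ₗ[ℝ] V₁) : End0 d :=
  ⟨(d ∘ₗ φ, φ ∘ₗ d), by
    rw [mem_End0]
    exact (comp_assoc _ _ _).symm⟩

/-- commutator bracket on `End⁰`. -/
def bkt0 (A B : End0 d) : End0 d :=
  ⟨(A.1.1 ∘ₗ B.1.1 - B.1.1 ∘ₗ A.1.1, A.1.2 ∘ₗ B.1.2 - B.1.2 ∘ₗ A.1.2), by
    have hA : A.1.1 ∘ₗ d = d ∘ₗ A.1.2 := A.2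
    have hB : B.1.1 ∘ₗ d = d ∘ₗ B.1.2 := B.2
    rw [mem_End0]
    have ha : ∀ x, A.1.1 (d x) = d (A.1.2 x) := fun x => LinearMap.congr_fun hA x
    have hb : ∀ x, B.1.1 (d x) = d (B.1.2 x) := fun x => LinearMap.congr_fun hB x
    ext m
    simp [ha, hb]⟩

/-- `[A,φ] = A₁ ∘ φ - φ ∘ A₀` for `A ∈ End⁰`, `φ ∈ End¹`. -/
def bktAφ (A : End0 d) (φ : V₀ →ₗ[ℝ] V₁) : V₀ →ₗ[ℝ] V₁ :=
  A.1.2 ∘ₗ φ - φ ∘ₗ A.1.1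

/-- `[φ,ψ]_δ = φ∘d∘ψ - ψ∘d∘φ`. -/
def bktδ (φ ψ : V₀ →ₗ[ℝ] V₁) : V₀ →ₗ[ℝ] V₁ :=
  φ ∘ₗ d ∘ₗ ψ - ψ ∘ₗ d ∘ₗ φ

/-- bracket on the morphism space `End⁰ ⊕ End¹` of `gl(𝕍)`. -/
def bkt (X Y : Gl d) : Gl d :=
  (bkt0 d X.1 Y.1, bktAφ d X.1 Y.2 - bktAφ d Y.1 X.2 + bktδ d X.2 Y.2)

/-- action of `gl(𝕍)` on `𝕍`:  `(A,φ)·(u,m) = (A₀u, A₁m + φ(u+dm))`. -/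
def act (X : Gl d) (ξ : V₀ × V₁) : V₀ × V₁ :=
  (X.1.1.1 ξ.1, X.1.1.2 ξ.2 + X.2 (ξ.1 + d ξ.2))

/-- the `𝕍`-valued pairing on `E`. -/
def pairE (e₁ e₂ : E d) : V₀ × V₁ :=
  (2⁻¹ : ℝ) • (act d e₁.1 e₂.2 + act d e₂.1 e₁.2)

/-- pairing at the level of objects. -/
def pairObj (x y : (End0 d) × V₀) : V₀ :=
  (2⁻¹ : ℝ) • (x.1.1.1 y.2 + y.1.1.1 x.2)

/-- the Courant bracket on `E`. -/
def courant (e₁ e₂ : E d) : E d :=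
  (bkt d e₁.1 e₂.1, (2⁻¹ : ℝ) • (act d e₁.1 e₂.2 - act d e₂.1 e₁.2))

/-- Courant bracket at the level of objects. -/
def courantObj (x y : (End0 d) × V₀) : (End0 d) × V₀ :=
  (bkt0 d x.1 y.1, (2⁻¹ : ℝ) • (x.1.1.1 y.2 - y.1.1.1 x.2))

/-- the Dorfman bracket on `E`. -/
def dorfman (e₁ e₂ : E d) : E d :=
  (bkt d e₁.1 e₂.1, act d e₁.1 e₂.2)

/-- source of a morphism of `gl(𝕍) ⊕ 𝕍`. -/
def sE (e : E d) : (End0 d) × V₀ := (e.1.1, e.2.1)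

/-- target of a morphism of `gl(𝕍) ⊕ 𝕍`. -/
def tE (e : E d) : (End0 d) × V₀ := (e.1.1 + δm d e.1.2, e.2.1 + d e.2.2)

/-- vertical composition of morphisms of `gl(𝕍) ⊕ 𝕍`. -/
def compE (e e' : E d) : E d := ((e.1.1, e.1.2 + e'.1.2), (e.2.1, e.2.2 + e'.2.2))

/-- vertical composition of morphisms of `𝕍`. -/
def compV (x y : V₀ × V₁) : V₀ × V₁ := (x.1, x.2 + y.2)

/-- orthogonal complement w.r.t. the `𝕍`-valued pairing. -/
def perp (L : Set (E d)) : Set (E d) := {e | ∀ l ∈ L, pairE d e l = 0}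

/-- bilinear functor data `(F₀, F_a, F_b)` for `𝕍`. -/
structure BilinData where
  F0 : V₀ →ₗ[ℝ] V₀ →ₗ[ℝ] V₀
  Fa : V₀ →ₗ[ℝ] V₁ →ₗ[ℝ] V₁
  Fb : V₁ →ₗ[ℝ] V₀ →ₗ[ℝ] V₁
  ha : ∀ u n, d (Fa u n) = F0 u (d n)
  hb : ∀ m v, d (Fb m v) = F0 (d m) v
  hc : ∀ m n, Fa (d m) n = Fb m (d n)

/-- `ad_F (u,m) = ((F₀(u,·), F_a(u,·)), F_b(m,·))`. -/
def adF (F : BilinData d) (ξ : V₀ × V₁) : Gl d :=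
  (⟨(F.F0 ξ.1, F.Fa ξ.1), by
      rw [mem_End0]
      ext n
      exact (F.ha ξ.1 n).symm⟩, F.Fb ξ.2)

/-- the graph `G_F = {(ad_F ξ, ξ)}`. -/
def graphF (F : BilinData d) : Set (E d) := {e | ∃ ξ : V₀ × V₁, e = (adF d F ξ, ξ)}

/-- an isomorphism `μ = (μ₀, μ₁, μ₂)` from the Lie 2-algebra `gl(𝕍)` to itself. -/
structure GlIso where
  μ0 : (End0 d) ≃ₗ[ℝ] (End0 d)
  μ1 : (Gl d) ≃ₗ[ℝ] (Gl d)
  hs : ∀ X : Gl d, (μ1 X).1 = μ0 X.1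
  ht : ∀ X : Gl d, (μ1 X).1 + δm d (μ1 X).2 = μ0 (X.1 + δm d X.2)
  hid : ∀ A : End0 d, μ1 (A, 0) = (μ0 A, 0)
  hcomp : ∀ (A : End0 d) (φ φ' : V₀ →ₗ[ℝ] V₁),
    μ1 (A, φ + φ') = ((μ1 (A, φ)).1, (μ1 (A, φ)).2 + (μ1 (A + δm d φ, φ')).2)
  μ2 : (End0 d) →ₗ[ℝ] (End0 d) →ₗ[ℝ] Gl d
  hskew : ∀ A B, μ2 A B = - μ2 B A
  hs2 : ∀ A B, (μ2 A B).1 = μ0 (bkt0 d A B)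
  ht2 : ∀ A B, (μ2 A B).1 + δm d (μ2 A B).2 = bkt0 d (μ0 A) (μ0 B)
  hnat : ∀ (A B : End0 d) (φ ψ : V₀ →ₗ[ℝ] V₁),
    (μ2 A B).2 + (bkt d (μ1 (A, φ)) (μ1 (B, ψ))).2
      = (μ1 (bkt d (A, φ) (B, ψ))).2 + (μ2 (A + δm d φ) (B + δm d ψ)).2
  hcoh : ∀ A B C : End0 d,
    (μ2 (bkt0 d A B) C).2 + (bkt d (μ2 A B) ((μ0 C, 0) : Gl d)).2
      = (μ2 A (bkt0 d B C)).2 + (μ2 B (bkt0 d C A)).2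
        + (bkt d ((μ0 A, 0) : Gl d) (μ2 B C)).2
        + (bkt d ((μ0 B, 0) : Gl d) (μ2 C A)).2

/-- the `μ`-twisted pairing on `E`. -/
def pairμ (μ : GlIso d) (e₁ e₂ : E d) : V₀ × V₁ :=
  (2⁻¹ : ℝ) • (act d (μ.μ1 e₁.1) e₂.2 + act d (μ.μ1 e₂.1) e₁.2)

/-- the `μ`-twisted Courant bracket on `E`. -/
def courantμ (μ : GlIso d) (e₁ e₂ : E d) : E d :=
  (bkt d e₁.1 e₂.1, (2⁻¹ : ℝ) • (act d (μ.μ1 e₁.1) e₂.2 - act d (μ.μ1 e₂.1) e₁.2))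

/-- orthogonal complement w.r.t. the `μ`-twisted pairing. -/
def perpμ (μ : GlIso d) (L : Set (E d)) : Set (E d) := {e | ∀ l ∈ L, pairμ d μ e l = 0}

/-- the `μ`-twisted Dorfman bracket at the level of objects. -/
def dorfObjμ (μ : GlIso d) (x y : (End0 d) × V₀) : (End0 d) × V₀ :=
  (bkt0 d x.1 y.1, (μ.μ0 x.1).1.1 y.2)

end Omni

end

namespace Omni

variable {V₀ V₁ : Type*} [AddCommGroup V₀] [Module ℝ V₀] [AddCommGroup V₁] [Module ℝ V₁]
  (d : V₁ →ₗ[ℝ] V₀)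

lemma act_zero_right (X : Gl d) : act d X 0 = 0 := by
  simp [act]

lemma act_sub_left (X Y : Gl d) (ξ : V₀ × V₁) :
    act d (X - Y) ξ = act d X ξ - act d Y ξ := by
  simp only [act, Prod.fst_sub, Prod.snd_sub, Submodule.coe_sub, LinearMap.sub_apply, Prod.mk_sub_mk]
  congr 1
  abel

lemma act_bkt (X Y : Gl d) (ξ : V₀ × V₁) :
    act d (bkt d X Y) ξ = act d X (act d Y ξ) - act d Y (act d X ξ) := by
  obtain ⟨⟨⟨A₀, A₁⟩, hA⟩, φ⟩ := X
  obtain ⟨⟨⟨B₀, B₁⟩, hB⟩, ψ⟩ := Y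
  have hA' : ∀ x, A₀ (d x) = d (A₁ x) := LinearMap.congr_fun hA
  have hB' : ∀ x, B₀ (d x) = d (B₁ x) := LinearMap.congr_fun hB
  simp only [act, bkt, bkt0, bktAφ, bktδ, Prod.mk_sub_mk, Prod.mk.injEq]
  constructor
  · simp
  · simp only [LinearMap.sub_apply, LinearMap.add_apply, coe_comp, Function.comp_apply, map_add]
    rw [← hA', ← hB']
    abel

lemma bkt_sub_right (X Y Z : Gl d) : bkt d X (Y - Z) = bkt d X Y - bkt d X Z := by
  ext <;> simp [bkt, bkt0, bktAφ, bktδ] <;> abel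

def charSet (𝔇 : Submodule ℝ (Gl d)) (π : (V₀ × V₁) →ₗ[ℝ] Gl d) (D0 : Set (V₀ × V₁)) :
    Set (E d) :=
  {e | ∃ X ∈ 𝔇, ∃ ξ ∈ D0, e = (X + π ξ, ξ)}

section CharSet

variable {d} {𝔇 : Submodule ℝ (Gl d)} {π : (V₀ × V₁) →ₗ[ℝ] Gl d} {D0 : Set (V₀ × V₁)}

lemma mk_mem_charSet_iff {Y : Gl d} {ξ : V₀ × V₁} :
    ((Y, ξ) : E d) ∈ charSet d 𝔇 π D0 ↔ ξ ∈ D0 ∧ Y - π ξ ∈ 𝔇 := by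
  constructor
  · rintro ⟨X, hX, ξ, hξ, ⟨⟩⟩
    simpa [hξ] using hX
  · rintro ⟨hξ, hY⟩
    exact ⟨Y - π ξ, hY, ξ, hξ, by simp⟩

lemma mem_iff_forall_act_eq_zero (hD0 : ∀ ξ ∈ D0, ∀ X ∈ 𝔇, act d X ξ = 0)
    (hmax : perp d (charSet d 𝔇 π D0) ⊆ charSet d 𝔇 π D0) (W : Gl d) :
    W ∈ 𝔇 ↔ ∀ ζ ∈ D0, act d W ζ = 0 := by
  refine ⟨fun hW ζ hζ => hD0 ζ hζ W hW, fun hW => ?_⟩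
  have hperp : ((W, 0) : E d) ∈ perp d (charSet d 𝔇 π D0) := by
    rintro ⟨Y, ζ⟩ hl
    simp [pairE, hW ζ (mk_mem_charSet_iff.1 hl).1, act_zero_right]
  simpa using (mk_mem_charSet_iff.1 (hmax hperp)).2

lemma bkt_sub_mem_iff (h𝔇 : ∀ W, W ∈ 𝔇 ↔ ∀ ζ ∈ D0, act d W ζ = 0) (N P Q : Gl d) :
    bkt d N P - Q ∈ 𝔇 ↔
      ∀ η ∈ D0, act d N (act d P η) = act d P (act d N η) + act d Q η := by
  rw [h𝔇]
  refine forall₂_congr fun η _ => ?_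
  rw [act_sub_left, act_bkt, sub_eq_zero, sub_eq_iff_eq_add, add_comm]

end CharSet

end Omni

open Omni in
theorem normalizer_characterization_general {V₀ V₁ : Type*} [AddCommGroup V₀] [Module ℝ V₀] [AddCommGroup V₁] [Module ℝ V₁]
    (d : V₁ →ₗ[ℝ] V₀)
    (𝔇 : Submodule ℝ (Gl d)) (π : (V₀ × V₁) →ₗ[ℝ] Gl d)
    (D0 : Set (V₀ × V₁)) (hD0 : D0 = {ξ : V₀ × V₁ | ∀ X ∈ 𝔇, act d X ξ = 0})
    (L : Set (E d))
    (hL : L = {e : E d | ∃ X ∈ 𝔇, ∃ ξ ∈ D0, e = (X + π ξ, ξ)})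
    (hmax : L = perp d L)
    (N : Gl d) :
    (∀ l ∈ L, dorfman d ((N, (0 : V₀ × V₁)) : E d) l ∈ L)
      ↔ ((∀ X ∈ 𝔇, bkt d N X ∈ 𝔇) ∧
         (∀ ξ ∈ D0, act d N ξ ∈ D0) ∧
         (∀ ξ ∈ D0, ∀ η ∈ D0,
           act d N (act d (π ξ) η)
             = act d (π ξ) (act d N η) + act d (π (act d N ξ)) η)) := by
  change L = charSet d 𝔇 π D0 at hL
  subst hL
  have hann : ∀ ξ ∈ D0, ∀ X ∈ 𝔇, act d X ξ = 0 := hD0 ▸ fun ξ hξ => hξ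
  have hder := bkt_sub_mem_iff (mem_iff_forall_act_eq_zero hann hmax.ge) N
  have h0 : (0 : V₀ × V₁) ∈ D0 := hD0 ▸ fun X _ => act_zero_right d X
  constructor
  · intro h
    have hpi : ∀ ξ ∈ D0, act d N ξ ∈ D0 ∧ bkt d N (π ξ) - π (act d N ξ) ∈ 𝔇 := fun ξ hξ =>
      mk_mem_charSet_iff.1 (h _ (mk_mem_charSet_iff.2 ⟨hξ, by simp⟩))
    refine ⟨fun X hX => ?_, fun ξ hξ => (hpi ξ hξ).1, fun ξ hξ => (hder _ _).1 (hpi ξ hξ).2⟩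
    simpa [act_zero_right] using
      (mk_mem_charSet_iff.1 (h (X, 0) (mk_mem_charSet_iff.2 ⟨h0, by simpa using hX⟩))).2
  · rintro ⟨hbkt, hact, hderiv⟩ ⟨Y, ξ⟩ hl
    obtain ⟨hξ, hY⟩ := mk_mem_charSet_iff.1 hl
    refine mk_mem_charSet_iff.2 ⟨hact ξ hξ, ?_⟩
    have hsum := add_mem (hbkt _ hY) ((hder _ _).2 (hderiv ξ hξ))
    rwa [bkt_sub_right, sub_add_sub_cancel] at hsum

open Omni in
/-- Characterization of the normalizer of a Dirac structure `L` with characteristic pair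
`(𝔇, π)`: `N ∈ N_L` iff `[N,𝔇] ⊆ 𝔇`, `N·𝔇⁰ ⊆ 𝔇⁰` and `N` is a derivation of the
induced bracket `[ξ,η]_{𝔇⁰} = π(ξ)·η` on `𝔇⁰`. -/
theorem normalizer_characterization {V₀ V₁ : Type*} [AddCommGroup V₀] [Module ℝ V₀] [AddCommGroup V₁] [Module ℝ V₁]
    [FiniteDimensional ℝ V₀] [FiniteDimensional ℝ V₁]
    (d : V₁ →ₗ[ℝ] V₀)
    (𝔇 : Submodule ℝ (Gl d)) (π : (V₀ × V₁) →ₗ[ℝ] Gl d)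
    (D0 : Set (V₀ × V₁)) (hD0 : D0 = {ξ : V₀ × V₁ | ∀ X ∈ 𝔇, act d X ξ = 0})
    (hskew : ∀ ξ ∈ D0, ∀ η ∈ D0, act d (π ξ) η = - act d (π η) ξ)
    (L : Set (E d))
    (hL : L = {e : E d | ∃ X ∈ 𝔇, ∃ ξ ∈ D0, e = (X + π ξ, ξ)})
    (hD : ∀ X : Gl d, ((X, (0 : V₀ × V₁)) : E d) ∈ L ↔ X ∈ 𝔇)
    (hmax : L = perp d L)
    (hclosed : ∀ e ∈ L, ∀ e' ∈ L, courant d e e' ∈ L)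
    (N : Gl d) :
    (∀ l ∈ L, dorfman d ((N, (0 : V₀ × V₁)) : E d) l ∈ L)
      ↔ ((∀ X ∈ 𝔇, bkt d N X ∈ 𝔇) ∧
         (∀ ξ ∈ D0, act d N ξ ∈ D0) ∧
         (∀ ξ ∈ D0, ∀ η ∈ D0,
           act d N (act d (π ξ) η)
             = act d (π ξ) (act d N η) + act d (π (act d N ξ)) η)) :=
  normalizer_characterization_general d 𝔇 π D0 hD0 L hL hmax N
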